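/- Let P be a finite point set in ℝ² and let H be a Jordan curve in the plane such that some point p ∈ P lies in the bounded region enclosed by H, and the open disk of radius dist(x,P) centered at x avoids P for each x ∈ H. Then for any x ∈ H, there exists x' ∈ H such that the closed disks B(x, dist(x,P)) and B(x', dist(x',P)) have disjoint interiors. -/

import Mathlib

/-!
Let `x ∈ H`. Since `p` lies in a bounded component of `Hᶜ`, the ray from `p` pointing away from
`x` must meet `H`, at some `x'`. Then `p` lies on the segment `[x, x']`, so
`dist x x' = dist x p + dist p x'`, while `p ∈ P` bounds the two radii by `dist x p` and
`dist x' p`; hence the open disks are disjoint.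
-/

open Metric Set

section

variable {E : Type*} [NormedAddCommGroup E] [NormedSpace ℝ E]

lemma not_isBounded_image_smul_add_Ici (p : E) {v : E} (hv : v ≠ 0) :
    ¬ Bornology.IsBounded ((fun t : ℝ => p + t • v) '' Ici 0) := by
  intro hbdd
  obtain ⟨r, hr⟩ := (isBounded_iff_subset_closedBall p).mp hbdd
  have hvpos : 0 < ‖v‖ := norm_pos_iff.mpr hv
  have ht : 0 ≤ (|r| + 1) / ‖v‖ := by positivity
  have hdist : dist (p + ((|r| + 1) / ‖v‖) • v) p = |r| + 1 := by
    rw [dist_eq_norm, add_sub_cancel_left, norm_smul, Real.norm_of_nonneg ht,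
      div_mul_cancel₀ _ hvpos.ne']
  have hle : dist (p + ((|r| + 1) / ‖v‖) • v) p ≤ r := hr ⟨_, ht, rfl⟩
  linarith [le_abs_self r]

lemma exists_nonneg_smul_add_mem_of_isBounded_connectedComponentIn {S : Set E} {p : E}
    (hbdd : Bornology.IsBounded (connectedComponentIn Sᶜ p)) {v : E} (hv : v ≠ 0) :
    ∃ t : ℝ, 0 ≤ t ∧ p + t • v ∈ S := by
  by_contra! hray
  have hsub : (fun t : ℝ => p + t • v) '' Ici 0 ⊆ Sᶜ := by
    rintro _ ⟨t, ht, rfl⟩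
    exact hray t ht
  have hconn : IsPreconnected ((fun t : ℝ => p + t • v) '' Ici 0) :=
    isPreconnected_Ici.image _ (by fun_prop)
  have hp : p ∈ (fun t : ℝ => p + t • v) '' Ici 0 := ⟨0, self_mem_Ici, by simp⟩
  exact not_isBounded_image_smul_add_Ici p hv
    (hbdd.subset (hconn.subset_connectedComponentIn hp hsub))

lemma dist_add_dist_add_smul_sub {x p : E} {t : ℝ} (ht : 0 ≤ t) :
    dist x p + dist p (p + t • (p - x)) = dist x (p + t • (p - x)) := by
  have hray : SameRay ℝ (p - x) (t • (p - x)) := SameRay.sameRay_nonneg_smul_right _ ht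
  rw [dist_comm x p, dist_comm p (p + _), dist_comm x (p + _), dist_eq_norm, dist_eq_norm,
    dist_eq_norm, add_sub_cancel_left, add_sub_right_comm, hray.norm_add]

end

lemma disjoint_ball_infDist_of_dist_add_dist_eq {α : Type*} [PseudoMetricSpace α] {s : Set α}
    {x y p : α} (hp : p ∈ s) (h : dist x p + dist p y = dist x y) :
    Disjoint (ball x (infDist x s)) (ball y (infDist y s)) := by
  apply ball_disjoint_ball
  linarith [infDist_le_dist_of_mem (x := x) hp, infDist_le_dist_of_mem (x := y) hp, dist_comm p y]

theorem disjoint_empty_disks_on_jordan_curve_general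
    (P : Finset (EuclideanSpace ℝ (Fin 2)))
    (H : Set (EuclideanSpace ℝ (Fin 2)))
    (p : EuclideanSpace ℝ (Fin 2)) (hp : p ∈ P)
    (hbounded : Bornology.IsBounded (connectedComponentIn Hᶜ p)) :
    ∀ x ∈ H, ∃ x' ∈ H,
      ball x (Metric.infDist x (P : Set (EuclideanSpace ℝ (Fin 2)))) ∩
        ball x' (Metric.infDist x' (P : Set (EuclideanSpace ℝ (Fin 2)))) = ∅ := by
  intro x hx
  obtain ⟨t, ht, hx'⟩ : ∃ t : ℝ, 0 ≤ t ∧ p + t • (p - x) ∈ H := by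
    rcases eq_or_ne p x with rfl | hpx
    · exact ⟨0, le_rfl, by simpa using hx⟩
    · exact exists_nonneg_smul_add_mem_of_isBounded_connectedComponentIn hbounded
        (sub_ne_zero.mpr hpx)
  exact ⟨_, hx', disjoint_iff_inter_eq_empty.mp <|
    disjoint_ball_infDist_of_dist_add_dist_eq (Finset.mem_coe.mpr hp)
      (dist_add_dist_add_smul_sub ht)⟩

/-- If a point p of P lies in the bounded region enclosed by a Jordan curve H,
and the open disk of radius dist(x,P) centered at x avoids P for each x ∈ H,
then for every x ∈ H there is an x' ∈ H whose maximal empty disks have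
disjoint interiors. -/
theorem disjoint_empty_disks_on_jordan_curve
    (P : Finset (EuclideanSpace ℝ (Fin 2)))
    (f : ℝ → EuclideanSpace ℝ (Fin 2))
    (hf : Continuous f) (hloop : f 0 = f 1)
    (hinj : Set.InjOn f (Set.Ico (0:ℝ) 1))
    (H : Set (EuclideanSpace ℝ (Fin 2))) (hH : H = f '' Set.Icc (0:ℝ) 1)
    (p : EuclideanSpace ℝ (Fin 2)) (hp : p ∈ P) (hpH : p ∉ H)
    (hbounded : Bornology.IsBounded (connectedComponentIn Hᶜ p))
    (hempty : ∀ x ∈ H, ∀ p' ∈ P,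
      p' ∉ ball x (Metric.infDist x (P : Set (EuclideanSpace ℝ (Fin 2))))) :
    ∀ x ∈ H, ∃ x' ∈ H,
      ball x (Metric.infDist x (P : Set (EuclideanSpace ℝ (Fin 2)))) ∩
        ball x' (Metric.infDist x' (P : Set (EuclideanSpace ℝ (Fin 2)))) = ∅ :=
  disjoint_empty_disks_on_jordan_curve_general P H p hp hbounded
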